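/- arXiv:1606.07945 — 3 statements merged into one kernel-verified Lean document; each statement's English description precedes it below -/
import Mathlib

section
/- Let d ≥ 1, set r = r(n) = sqrt(2 log n − log log n), and let y ∈ R^d with ‖y‖ = r. Define y⁰ = (1 + r^{−2})y, let H = {x ∈ R^d : ⟨x, y⟩ = r²} be the tangent hyperplane of S(r) at y, and let y¹,…,y^d be the vertices of a regular (d−1)-dimensional simplex in H inscribed in the sphere of radius √2 in H centered at y. Let Δ = conv(y⁰, y¹,…,y^d). Then vol_d(Δ) ≍ (log n)^{−1/2} and γ_d(Δ) ≍ n^{−1} as n → ∞, with the implied constants depending only on d. -/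
set_option maxHeartbeats 1000000


open MeasureTheory ProbabilityTheory Real Set Filter
open scoped ENNReal NNReal RealInnerProductSpace MeasureTheory
open scoped Pointwise

noncomputable section

abbrev Euc (d : ℕ) := EuclideanSpace ℝ (Fin d)

/-- The standard Gaussian measure `γ_d` on `ℝ^d`. -/
noncomputable def stdGaussian (d : ℕ) : Measure (Euc d) :=
  volume.withDensity fun x => ENNReal.ofReal ((2 * π) ^ (-(d : ℝ) / 2) * Real.exp (-‖x‖ ^ 2 / 2))

/-- The radius `r(n) = sqrt(2 log n − log log n)`. -/
noncomputable def rr (n : ℕ) : ℝ := Real.sqrt (2 * Real.log n - Real.log (Real.log n))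

/-- Configuration data for the simplex construction: `y` lies on the sphere of radius `r`,
and `yv 1, …, yv d` are the vertices of a regular `(d−1)`-dimensional simplex lying in the
tangent hyperplane of the sphere at `y`, with circumcentre `y` and circumradius `√2`. -/
structure SimplexConfig (d : ℕ) (r : ℝ) (y : Euc d) (yv : Fin d → Euc d) : Prop where
  norm_y : ‖y‖ = r
  mem_tangent : ∀ j, (inner ℝ (yv j) y : ℝ) = r ^ 2
  circumradius : ∀ j, ‖yv j - y‖ = Real.sqrt 2
  regular : ∃ s : ℝ, 0 < s ∧ ∀ j k : Fin d, j ≠ k → ‖yv j - yv k‖ = s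

/-- The apex `y⁰ = (1 + r^{−2}) y` of the simplex `Δ`. -/
noncomputable def apexPt {d : ℕ} (r : ℝ) (y : Euc d) : Euc d := (1 + (r ^ 2)⁻¹) • y

/-- The simplex `Δ = conv(y⁰, y¹, …, y^d)`. -/
noncomputable def simplexΔ {d : ℕ} (r : ℝ) (y : Euc d) (yv : Fin d → Euc d) : Set (Euc d) :=
  convexHull ℝ (insert (apexPt r y) (Set.range yv))

/-- The vertices of `Δ`: index `0` is the apex `y⁰`, index `j+1` is `y^{j+1}`. -/
noncomputable def vertexOf {d : ℕ} (r : ℝ) (y : Euc d) (yv : Fin d → Euc d) :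
    Fin (d + 1) → Euc d :=
  Fin.cons (apexPt r y) yv

/-- The homothetic copy `Δ^j := y^j + c₂ (Δ − y^j)` of `Δ` with centre the vertex `y^j` and
ratio `c₂`. -/
noncomputable def smallSimplex {d : ℕ} (c₂ r : ℝ) (y : Euc d) (yv : Fin d → Euc d)
    (j : Fin (d + 1)) : Set (Euc d) :=
  (fun x => vertexOf r y yv j + c₂ • (x - vertexOf r y yv j)) '' simplexΔ r y yv

/-- The positive hull `pos{v j}` of a finite family of vectors. -/
def posHull {d : ℕ} {ι : Type} [Fintype ι] (v : ι → Euc d) : Set (Euc d) :=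
  {x | ∃ c : ι → ℝ, (∀ i, 0 ≤ c i) ∧ x = ∑ i, c i • v i}

/-- The closed circular cone `C(z, α)` with apex `0`, axis `{tz : t ≥ 0}` and angle `α`,
i.e. the set of `x` with `∠(x,z) ≤ α` (together with the apex `0`). -/
def circCone {d : ℕ} (z : Euc d) (α : ℝ) : Set (Euc d) :=
  {x | Real.cos α * (‖x‖ * ‖z‖) ≤ (inner ℝ x z : ℝ)}

variable {d : ℕ} {r : ℝ} {y : Euc d} {yv : Fin d → Euc d}

lemma SimplexConfig.inner_sub_y (h : SimplexConfig d r y yv) (j : Fin d) :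
    ⟪yv j - y, y⟫ = 0 := by
  rw [inner_sub_left, h.mem_tangent, real_inner_self_eq_norm_sq, h.norm_y]
  ring

lemma SimplexConfig.inner_self (h : SimplexConfig d r y yv) (j : Fin d) :
    ⟪yv j - y, yv j - y⟫ = 2 := by
  rw [real_inner_self_eq_norm_sq, h.circumradius]
  rw [Real.sq_sqrt (by norm_num)]

lemma SimplexConfig.y_ne_zero (hr : 0 < r) (h : SimplexConfig d r y yv) : y ≠ 0 := by
  intro h0
  have h1 := h.norm_y
  rw [h0, norm_zero] at h1
  exact hr.ne' h1.symm

lemma SimplexConfig.mem_orth (h : SimplexConfig d r y yv) (j : Fin d) :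
    yv j - y ∈ (ℝ ∙ y)ᗮ := by
  rw [Submodule.mem_orthogonal_singleton_iff_inner_right, real_inner_comm]
  exact h.inner_sub_y j

lemma SimplexConfig.not_linearIndependent (hd : 1 ≤ d) (hr : 0 < r)
    (h : SimplexConfig d r y yv) : ¬ LinearIndependent ℝ (fun j => yv j - y) := by
  intro hli
  have hy := h.y_ne_zero hr
  have hfr : Module.finrank ℝ ((ℝ ∙ y)ᗮ : Submodule ℝ (Euc d)) = d - 1 := by
    have h2 := Submodule.finrank_add_finrank_orthogonal (K := (ℝ ∙ y)) (𝕜 := ℝ)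
    rw [finrank_span_singleton hy] at h2
    simp only [finrank_euclideanSpace, Fintype.card_fin] at h2
    omega
  have hli' : LinearIndependent ℝ
      (fun j => (⟨yv j - y, h.mem_orth j⟩ : ((ℝ ∙ y)ᗮ : Submodule ℝ (Euc d)))) :=
    hli.of_comp ((ℝ ∙ y)ᗮ).subtype
  have hcard := hli'.fintype_card_le_finrank
  rw [hfr, Fintype.card_fin] at hcard
  omega

lemma simplexConfig_d1_false {r : ℝ} {y : Euc 1} {yv : Fin 1 → Euc 1}
    (hr : 0 < r) (h : SimplexConfig 1 r y yv) : False := by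
  apply h.not_linearIndependent le_rfl hr
  have h0 : yv 0 - y ≠ 0 := by
    intro hz
    have hc := h.circumradius 0
    rw [hz, norm_zero] at hc
    have : (0:ℝ) < Real.sqrt 2 := Real.sqrt_pos.2 (by norm_num)
    linarith [hc ▸ this]
  exact linearIndependent_unique_iff.mpr h0

lemma SimplexConfig.inner_pairs (hd : 1 ≤ d) (hr : 0 < r) (h : SimplexConfig d r y yv) :
    ∀ i j, i ≠ j → ⟪yv i - y, yv j - y⟫ = -2 / ((d : ℝ) - 1) := by
  obtain ⟨s, hs, hreg⟩ := h.regular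
  set t : ℝ := 2 - s ^ 2 / 2 with ht_def
  have ht : ∀ i j, i ≠ j → ⟪yv i - y, yv j - y⟫ = t := by
    intro i j hij
    have h1 : ‖(yv i - y) - (yv j - y)‖ = s := by
      rw [sub_sub_sub_cancel_right]; exact hreg i j hij
    have h2 := norm_sub_sq_real (yv i - y) (yv j - y)
    rw [h1] at h2
    have hi2 : ‖yv i - y‖ ^ 2 = 2 := by rw [h.circumradius]; exact Real.sq_sqrt (by norm_num)
    have hj2 : ‖yv j - y‖ ^ 2 = 2 := by rw [h.circumradius]; exact Real.sq_sqrt (by norm_num)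
    rw [hi2, hj2] at h2
    rw [ht_def]; linarith
  obtain ⟨c, hc0, i₀, hi₀⟩ := Fintype.not_linearIndependent_iff.mp (h.not_linearIndependent hd hr)
  set S : ℝ := ∑ j, c j with hS_def
  have e2 : ∀ k, c k * (2 - t) + S * t = 0 := by
    intro k
    have e1 : ∑ j, c j * ⟪yv j - y, yv k - y⟫ = 0 := by
      have hc := congrArg (fun v : Euc d => ⟪v, yv k - y⟫) hc0
      simpa [sum_inner, real_inner_smul_left, Finset.mul_sum, mul_assoc] using hc
    rw [← Finset.add_sum_erase _ _ (Finset.mem_univ k)] at e1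
    have e1' : ∑ j ∈ Finset.univ.erase k, c j * ⟪yv j - y, yv k - y⟫
        = (S - c k) * t := by
      rw [Finset.sum_congr rfl (fun j hj => by
        rw [ht j k (Finset.mem_erase.1 hj).1])]
      rw [← Finset.sum_mul, Finset.sum_erase_eq_sub (Finset.mem_univ k)]
    rw [e1', h.inner_self k] at e1
    linarith
  have e3 : S * ((2 - t) + (d : ℝ) * t) = 0 := by
    have h4 : ∑ k : Fin d, (c k * (2 - t) + S * t) = 0 := by
      rw [Finset.sum_congr rfl (fun k _ => e2 k)]; simp
    rw [Finset.sum_add_distrib, ← Finset.sum_mul, Finset.sum_const, Finset.card_univ,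
      Fintype.card_fin, nsmul_eq_mul] at h4
    rw [← hS_def] at h4
    ring_nf
    ring_nf at h4
    linarith
  have h2t : 0 < 2 - t := by rw [ht_def]; nlinarith
  by_cases hS : S = 0
  · exfalso
    have := e2 i₀
    rw [hS, zero_mul, add_zero] at this
    exact hi₀ ((mul_eq_zero.mp this).resolve_right h2t.ne')
  · have h5 : (2 - t) + (d : ℝ) * t = 0 := by
      rcases mul_eq_zero.mp e3 with h | h
      · exact absurd h hS
      · exact h
    have hd1 : (1:ℝ) ≤ (d:ℝ) := by exact_mod_cast hd
    have htv : t = -2 / ((d : ℝ) - 1) := by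
      rcases eq_or_lt_of_le hd1 with hdeq | hdlt
      · exfalso; rw [← hdeq] at h5; linarith
      · have hne : (d:ℝ) - 1 ≠ 0 := by linarith
        field_simp
        linear_combination h5
    intro i j hij
    rw [ht i j hij, htv]

def refSimplex (d : ℕ) : Set (Euc d) :=
  convexHull ℝ (insert (0 : Euc d) (Set.range fun j : Fin d => (EuclideanSpace.basisFun (Fin d) ℝ) j))

lemma refSimplex_vol_pos (d : ℕ) : 0 < volume (refSimplex d) := by
  apply MeasureTheory.Measure.measure_pos_of_nonempty_interior
  rw [refSimplex, Convex.interior_nonempty_iff_affineSpan_eq_top (convex_convexHull ℝ _)]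
  rw [affineSpan_convexHull]
  rw [← AffineSubspace.coe_eq_univ_iff]
  rw [affineSpan_insert_zero]
  have : Submodule.span ℝ (Set.range fun j : Fin d => (EuclideanSpace.basisFun (Fin d) ℝ) j) = ⊤ := by
    have := (EuclideanSpace.basisFun (Fin d) ℝ).toBasis.span_eq
    rw [OrthonormalBasis.coe_toBasis] at this
    exact this
  rw [this]; simp

lemma refSimplex_vol_lt_top (d : ℕ) : volume (refSimplex d) < ⊤ :=
  (((Set.finite_range _).insert _).isCompact_convexHull (𝕜 := ℝ)).measure_lt_top

lemma det_aI_bJ (d : ℕ) (a b : ℝ) (ha : a ≠ 0) :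
    (Matrix.of fun i j : Fin d => (if i = j then a else 0) + b).det
      = a ^ d * (1 + d * (b / a)) := by
  have hmat : (Matrix.of fun i j : Fin d => (if i = j then a else 0) + b)
      = a • ((1 : Matrix (Fin d) (Fin d) ℝ)
          + Matrix.replicateCol (Fin 1) ((b / a) • (1 : Fin d → ℝ)) * Matrix.replicateRow (Fin 1) (1 : Fin d → ℝ)) := by
    ext i j
    simp only [Matrix.of_apply, Matrix.smul_apply, Matrix.add_apply, Matrix.one_apply,
      Matrix.mul_apply, Matrix.replicateCol_apply, Matrix.replicateRow_apply, Fin.sum_univ_one, Pi.smul_apply,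
      Pi.one_apply, smul_eq_mul]
    split_ifs <;> field_simp <;> ring
  rw [hmat, Matrix.det_smul]
  erw [Matrix.det_one_add_replicateCol_mul_replicateRow (ι := Fin 1) ((b / a) • (1 : Fin d → ℝ)) (1 : Fin d → ℝ)]
  simp [dotProduct, Finset.sum_const, mul_comm]

lemma SimplexConfig.volume_eq {d : ℕ} {r : ℝ} {y : Euc d} {yv : Fin d → Euc d}
    (hd : 2 ≤ d) (hr : 0 < r) (h : SimplexConfig d r y yv) :
    volume (simplexΔ r y yv)
      = ENNReal.ofReal (Real.sqrt ((2 * (d:ℝ) / ((d:ℝ) - 1)) ^ (d - 1) * d) / r)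
        * volume (refSimplex d) := by
  have hd1 : (0:ℝ) < (d:ℝ) - 1 := by
    have : (2:ℝ) ≤ (d:ℝ) := by exact_mod_cast hd
    linarith
  have hrne : r ≠ 0 := hr.ne'
  set c : ℝ := (r ^ 2)⁻¹ with hc_def
  set u : Fin d → Euc d := fun j => yv j - y with hu_def
  set w : Fin d → Euc d := fun j => yv j - apexPt r y with hw_def
  have hw : ∀ j, w j = u j - c • y := by
    intro j
    simp only [hw_def, hu_def, apexPt, hc_def]
    rw [add_smul, one_smul]
    abel
  set t' : ℝ := -2 / ((d:ℝ) - 1) with ht'_def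
  have hinner : ∀ i j, ⟪u i, u j⟫ = (if i = j then (2:ℝ) else t') := by
    intro i j
    by_cases hij : i = j
    · simp only [hij, if_true]; exact h.inner_self j
    · simp only [hij, if_false]; exact h.inner_pairs (by omega) hr i j hij
  have huy : ∀ i, ⟪u i, y⟫ = 0 := fun i => h.inner_sub_y i
  have hy2 : ∀ i, ⟪y, u i⟫ = 0 := fun i => by
    rw [real_inner_comm]; exact h.inner_sub_y i
  have hcc : c * (c * r ^ 2) = c := by rw [hc_def]; field_simp
  have hentry : ∀ i j, ⟪w i, w j⟫ = (if i = j then (2:ℝ) else t') + c := by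
    intro i j
    rw [hw i, hw j]
    simp only [inner_sub_left, inner_sub_right, real_inner_smul_left, real_inner_smul_right]
    rw [huy i, hy2 j, real_inner_self_eq_norm_sq, h.norm_y, hinner i j]
    linarith [hcc]
  set B := (Matrix.of fun i j => w j i : Matrix (Fin d) (Fin d) ℝ) with hB_def
  have hBtB : B.transpose * B = Matrix.of fun i j => (if i = j then (2:ℝ) else t') + c := by
    ext i j
    simp only [Matrix.mul_apply, Matrix.transpose_apply, Matrix.of_apply, hB_def]
    rw [← hentry i j]
    simp [PiLp.inner_apply, RCLike.inner_apply, conj_trivial]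
    exact Finset.sum_congr rfl fun _ _ => mul_comm _ _
  have ha : (2 - t') ≠ 0 := by
    have h0 : 0 < 2 - t' := by
      rw [ht'_def, neg_div, sub_neg_eq_add]
      positivity
    exact h0.ne'
  have hA : 2 - t' = 2 * (d:ℝ) / ((d:ℝ) - 1) := by rw [ht'_def]; field_simp; ring
  have hdet2 : B.det ^ 2 = (2 * (d:ℝ) / ((d:ℝ) - 1)) ^ (d - 1) * d / r ^ 2 := by
    have h1 : B.det ^ 2 = (B.transpose * B).det := by rw [Matrix.det_mul, Matrix.det_transpose]; ring
    have hform : (Matrix.of fun i j : Fin d => (if i = j then (2:ℝ) else t') + c)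
        = Matrix.of fun i j : Fin d => (if i = j then (2 - t') else 0) + (t' + c) := by
      ext i j
      simp only [Matrix.of_apply]
      split_ifs <;> ring
    rw [h1, hBtB, hform, det_aI_bJ d _ _ ha]
    have hpow : (2 - t') ^ d = (2 - t') ^ (d - 1) * (2 - t') := by
      conv_lhs => rw [show d = (d - 1) + 1 by omega]
      rw [pow_succ]
    rw [hpow, hA]
    rw [ht'_def, hc_def]
    field_simp
    ring
  have hBdet : |B.det| = Real.sqrt ((2 * (d:ℝ) / ((d:ℝ) - 1)) ^ (d - 1) * (d:ℝ)) / r := by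
    have h0 : (0:ℝ) ≤ (2 * (d:ℝ) / ((d:ℝ) - 1)) ^ (d - 1) * (d:ℝ) := by positivity
    rw [← Real.sqrt_sq_eq_abs, hdet2, Real.sqrt_div h0, Real.sqrt_sq hr.le]
  set bb := (EuclideanSpace.basisFun (Fin d) ℝ).toBasis with hbb
  set L := Matrix.toLin bb bb B with hL
  have hLdet : LinearMap.det L = B.det := LinearMap.det_toLin bb B
  have hLe : ∀ j, L (EuclideanSpace.single j 1) = w j := by
    intro j
    have hsingle : (EuclideanSpace.single j (1:ℝ)) = bb j := by
      simp [hbb, EuclideanSpace.basisFun_apply]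
    rw [hsingle, Matrix.toLin_self]
    ext k
    rw [WithLp.ofLp_sum, Fintype.sum_apply]
    simp [hbb, EuclideanSpace.basisFun_apply, hB_def, EuclideanSpace.single_apply]
  have himg : simplexΔ r y yv = apexPt r y +ᵥ (⇑L '' refSimplex d) := by
    rw [simplexΔ, refSimplex]
    rw [L.image_convexHull, ← convexHull_vadd]
    congr 1
    rw [← Set.image_vadd, Set.image_insert_eq, Set.image_insert_eq, map_zero,
      ← Set.range_comp, ← Set.range_comp]
    have h0 : apexPt r y +ᵥ (0 : Euc d) = apexPt r y := by simp
    have hfun : ((fun x => apexPt r y +ᵥ x) ∘ ⇑L ∘ fun j : Fin d =>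
        (EuclideanSpace.basisFun (Fin d) ℝ) j) = yv := by
      funext j
      simp only [Function.comp_apply, vadd_eq_add]
      rw [show ((EuclideanSpace.basisFun (Fin d) ℝ) j : Euc d) = EuclideanSpace.single j 1 from by
        simp [EuclideanSpace.basisFun_apply], hLe j]
      simp [hw_def]
    rw [h0, hfun]
  rw [himg, measure_vadd (μ := volume), Measure.addHaar_image_linearMap, hLdet, hBdet]

lemma SimplexConfig.norm_bounds {d : ℕ} {r : ℝ} {y : Euc d} {yv : Fin d → Euc d}
    (hr : 1 ≤ r) (h : SimplexConfig d r y yv) :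
    ∀ x ∈ simplexΔ r y yv, r ^ 2 ≤ ‖x‖ ^ 2 ∧ ‖x‖ ^ 2 ≤ r ^ 2 + 3 := by
  have hr0 : 0 < r := lt_of_lt_of_le one_pos hr
  set Cs : Set (Euc d) := {x | r ^ 2 ≤ ⟪x, y⟫} ∩ Metric.closedBall 0 (Real.sqrt (r ^ 2 + 3))
    with hCs_def
  have hconv : Convex ℝ Cs := by
    apply Convex.inter _ (convex_closedBall _ _)
    have hlin : IsLinearMap ℝ (fun x : Euc d => ⟪x, y⟫) :=
      ⟨fun a b => inner_add_left a b y, fun c a => real_inner_smul_left a y c⟩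
    exact convex_halfSpace_ge hlin _
  have hsub : simplexΔ r y yv ⊆ Cs := by
    rw [simplexΔ]
    apply convexHull_min _ hconv
    rintro v (rfl | ⟨j, rfl⟩)
    · constructor
      · show r ^ 2 ≤ ⟪apexPt r y, y⟫
        rw [apexPt, real_inner_smul_left, real_inner_self_eq_norm_sq, h.norm_y]
        have : (r ^ 2)⁻¹ * r ^ 2 = 1 := by field_simp
        nlinarith
      · rw [Metric.mem_closedBall, dist_zero_right, apexPt, norm_smul]
        have h1 : ‖(1 + (r ^ 2)⁻¹ : ℝ)‖ = 1 + (r ^ 2)⁻¹ := by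
          rw [Real.norm_eq_abs, abs_of_pos]; positivity
        rw [h1, h.norm_y]
        rw [show (1 + (r ^ 2)⁻¹) * r = r + r⁻¹ by field_simp]
        rw [Real.le_sqrt (by positivity)]
        have e1 : r * r⁻¹ = 1 := mul_inv_cancel₀ hr0.ne'
        have e2 : r⁻¹ ≤ 1 := by
          rw [inv_le_one_iff₀]; right; exact hr
        have e3 : 0 < r⁻¹ := by positivity
        nlinarith
        positivity
    · constructor
      · show r ^ 2 ≤ ⟪yv j, y⟫
        rw [h.mem_tangent]
      · rw [Metric.mem_closedBall, dist_zero_right]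
        have h2 : ‖yv j‖ ^ 2 = r ^ 2 + 2 := by
          have : yv j = (yv j - y) + y := by abel
          rw [this, norm_add_sq_real, h.circumradius]
          have h3 : ⟪yv j - y, y⟫ = 0 := by
            rw [inner_sub_left, h.mem_tangent, real_inner_self_eq_norm_sq, h.norm_y]; ring
          rw [h3, Real.sq_sqrt (by norm_num : (0:ℝ) ≤ 2), h.norm_y]
          ring
        have : ‖yv j‖ ≤ Real.sqrt (r ^ 2 + 3) := by
          rw [show ‖yv j‖ = Real.sqrt (‖yv j‖ ^ 2) from (Real.sqrt_sq (norm_nonneg _)).symm, h2]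
          exact Real.sqrt_le_sqrt (by linarith)
        exact this
  intro x hx
  obtain ⟨h1, h2⟩ := hsub hx
  constructor
  · have hcs : ⟪x, y⟫ ≤ ‖x‖ * ‖y‖ := real_inner_le_norm x y
    rw [h.norm_y] at hcs
    have : r ^ 2 ≤ ‖x‖ * r := le_trans h1 hcs
    have hxr : r ≤ ‖x‖ := by
      by_contra hc
      push_neg at hc
      nlinarith
    nlinarith [norm_nonneg x]
  · have := Metric.mem_closedBall.1 h2
    rw [dist_zero_right] at this
    nlinarith [Real.sq_sqrt (show (0:ℝ) ≤ r ^ 2 + 3 by positivity), Real.sqrt_nonneg (r ^ 2 + 3),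
      norm_nonneg x]


lemma gauss_sandwich (d : ℕ) (s : Set (Euc d)) (hs : MeasurableSet s) (r : ℝ) (hr : 0 < r)
    (hsub : ∀ x ∈ s, r ^ 2 ≤ ‖x‖ ^ 2 ∧ ‖x‖ ^ 2 ≤ r ^ 2 + 3) (hfin : volume s ≠ ⊤) :
    (2 * π) ^ (-(d : ℝ) / 2) * Real.exp (-(r ^ 2 + 3) / 2) * (volume s).toReal
      ≤ (stdGaussian d s).toReal ∧
    (stdGaussian d s).toReal
      ≤ (2 * π) ^ (-(d : ℝ) / 2) * Real.exp (-r ^ 2 / 2) * (volume s).toReal := by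
  set C : ℝ := (2 * π) ^ (-(d : ℝ) / 2) with hC_def
  have hC : 0 < C := Real.rpow_pos_of_pos (by positivity) _
  have key : ∀ x ∈ s, ENNReal.ofReal (C * Real.exp (-(r ^ 2 + 3) / 2))
      ≤ ENNReal.ofReal (C * Real.exp (-‖x‖ ^ 2 / 2)) ∧
      ENNReal.ofReal (C * Real.exp (-‖x‖ ^ 2 / 2))
      ≤ ENNReal.ofReal (C * Real.exp (-r ^ 2 / 2)) := by
    intro x hx
    obtain ⟨h1, h2⟩ := hsub x hx
    constructor <;> apply ENNReal.ofReal_le_ofReal <;>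
      apply mul_le_mul_of_nonneg_left _ hC.le <;> apply Real.exp_le_exp.2 <;> linarith
  have happ : stdGaussian d s = ∫⁻ x in s, ENNReal.ofReal (C * Real.exp (-‖x‖ ^ 2 / 2)) := by
    rw [_root_.stdGaussian, withDensity_apply _ hs]
  have hup : stdGaussian d s ≤ ENNReal.ofReal (C * Real.exp (-r ^ 2 / 2)) * volume s := by
    rw [happ, ← setLIntegral_const s]
    exact setLIntegral_mono measurable_const fun x hx => (key x hx).2
  have hlo : ENNReal.ofReal (C * Real.exp (-(r ^ 2 + 3) / 2)) * volume s ≤ stdGaussian d s := by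
    rw [happ, ← setLIntegral_const s]
    exact setLIntegral_mono (by fun_prop) fun x hx => (key x hx).1
  have hne : stdGaussian d s ≠ ⊤ :=
    (lt_of_le_of_lt hup (by exact ENNReal.mul_lt_top ENNReal.ofReal_lt_top hfin.lt_top)).ne
  constructor
  · have := ENNReal.toReal_mono hne hlo
    rwa [ENNReal.toReal_mul, ENNReal.toReal_ofReal (by positivity)] at this
  · have := ENNReal.toReal_mono (by exact ENNReal.mul_ne_top ENNReal.ofReal_ne_top hfin) hup
    rwa [ENNReal.toReal_mul, ENNReal.toReal_ofReal (by positivity)] at this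


lemma rr_facts (n : ℕ) (hn : 3 ≤ n) :
    1 ≤ Real.log n ∧ Real.sqrt (Real.log n) ≤ rr n ∧
    rr n ≤ Real.sqrt 2 * Real.sqrt (Real.log n) ∧
    Real.exp (-(rr n) ^ 2 / 2) = Real.sqrt (Real.log n) / n ∧ 1 ≤ rr n := by
  have hn3 : (3:ℝ) ≤ n := by exact_mod_cast hn
  have hL1 : 1 ≤ Real.log n := by
    rw [Real.le_log_iff_exp_le (by linarith)]
    calc Real.exp 1 ≤ 2.7182818286 := Real.exp_one_lt_d9.le
    _ ≤ n := by linarith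
  set L := Real.log n with hL_def
  have hL0 : 0 < L := by linarith
  have hlogL0 : 0 ≤ Real.log L := Real.log_nonneg hL1
  have hlogLL : Real.log L ≤ L := by linarith [Real.log_le_sub_one_of_pos hL0]
  have hr2 : (rr n) ^ 2 = 2 * L - Real.log L := Real.sq_sqrt (by linarith)
  refine ⟨hL1, ?_, ?_, ?_, ?_⟩
  · rw [rr]; exact Real.sqrt_le_sqrt (by linarith)
  · rw [rr, ← Real.sqrt_mul (by norm_num : (0:ℝ) ≤ 2) L]
    exact Real.sqrt_le_sqrt (by linarith)
  · rw [hr2]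
    have e : -(2 * L - Real.log L) / 2 = -L + Real.log L / 2 := by ring
    rw [e, Real.exp_add, Real.exp_neg, Real.exp_log (by linarith : (0:ℝ) < n)]
    rw [← Real.log_sqrt hL0.le, Real.exp_log (Real.sqrt_pos.2 hL0)]
    ring
  · calc (1:ℝ) = Real.sqrt 1 := Real.sqrt_one.symm
      _ ≤ rr n := Real.sqrt_le_sqrt (by linarith)


/-- The simplex `Δ` has Lebesgue volume of order `(log n)^{−1/2}` and Gaussian measure of
order `n^{−1}`. -/
theorem simplex_volume_and_gaussian_measure (d : ℕ) (hd : 1 ≤ d) :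
    ∃ a₁ b₁ a₂ b₂ : ℝ, 0 < a₁ ∧ 0 < b₁ ∧ 0 < a₂ ∧ 0 < b₂ ∧ ∃ N : ℕ, ∀ n : ℕ, N ≤ n →
      ∀ (y : Euc d) (yv : Fin d → Euc d), SimplexConfig d (rr n) y yv →
        (a₁ * Real.log n ^ (-(1 : ℝ) / 2) ≤ (volume (simplexΔ (rr n) y yv)).toReal ∧
          (volume (simplexΔ (rr n) y yv)).toReal ≤ b₁ * Real.log n ^ (-(1 : ℝ) / 2)) ∧
        (a₂ / n ≤ (stdGaussian d (simplexΔ (rr n) y yv)).toReal ∧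
          (stdGaussian d (simplexΔ (rr n) y yv)).toReal ≤ b₂ / n) := by
  rcases lt_or_ge d 2 with hd2 | hd2
  · have hd1 : d = 1 := by omega
    subst hd1
    refine ⟨1, 1, 1, 1, one_pos, one_pos, one_pos, one_pos, 3, fun n hn y yv hcfg => ?_⟩
    have hr1 : (1:ℝ) ≤ rr n := (rr_facts n hn).2.2.2.2
    exact absurd hcfg fun hc => simplexConfig_d1_false (lt_of_lt_of_le one_pos hr1) hc
  · have hd2R : (2:ℝ) ≤ (d:ℝ) := by exact_mod_cast hd2
    have hd1R : (0:ℝ) < (d:ℝ) - 1 := by linarith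
    have hd0R : (0:ℝ) < (d:ℝ) := by linarith
    set κ := (volume (refSimplex d)).toReal with hκdef
    set S := Real.sqrt ((2 * (d:ℝ) / ((d:ℝ) - 1)) ^ (d - 1) * (d:ℝ)) with hSdef
    set K := S * κ with hKdef
    set C := (2 * π) ^ (-(d:ℝ) / 2) with hCdef
    have hκ : 0 < κ := ENNReal.toReal_pos (refSimplex_vol_pos d).ne' (refSimplex_vol_lt_top d).ne
    have hS : 0 < S := Real.sqrt_pos.2
      (mul_pos (pow_pos (div_pos (by positivity) hd1R) _) hd0R)
    have hK : 0 < K := mul_pos hS hκ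
    have hC : 0 < C := Real.rpow_pos_of_pos (by positivity) _
    have hE : (0:ℝ) < Real.exp (-(3:ℝ)/2) := Real.exp_pos _
    refine ⟨K / Real.sqrt 2, K, C * Real.exp (-(3:ℝ)/2) * K / Real.sqrt 2, C * K,
      by positivity, hK, by positivity, by positivity, 3, fun n hn y yv hcfg => ?_⟩
    obtain ⟨hL1, hsL_le, hle_sL, hexp, hr1⟩ := rr_facts n hn
    set L := Real.log n with hLdef
    set sL := Real.sqrt L with hsLdef
    set r := rr n with hrdef
    have hr0 : 0 < r := lt_of_lt_of_le one_pos hr1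
    have hsL1 : 1 ≤ sL := by
      rw [hsLdef]
      calc (1:ℝ) = Real.sqrt 1 := Real.sqrt_one.symm
        _ ≤ _ := Real.sqrt_le_sqrt hL1
    have hsL0 : 0 < sL := lt_of_lt_of_le one_pos hsL1
    have hn0 : (0:ℝ) < n := by
      have : (3:ℝ) ≤ n := by exact_mod_cast hn
      linarith
    have hs2 : (0:ℝ) < Real.sqrt 2 := by positivity
    have hvol : (volume (simplexΔ r y yv)).toReal = K / r := by
      rw [hcfg.volume_eq hd2 hr0, ENNReal.toReal_mul,
        ENNReal.toReal_ofReal (div_nonneg (Real.sqrt_nonneg _) hr0.le)]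
      rw [hKdef, hSdef, hκdef]
      ring
    have hrpow : (Real.log n) ^ (-(1:ℝ)/2) = sL⁻¹ := by
      rw [show (-(1:ℝ)/2) = -(1/2 : ℝ) by ring, Real.rpow_neg (by linarith : (0:ℝ) ≤ Real.log n),
        ← Real.sqrt_eq_rpow]
    constructor
    · rw [hvol, hrpow]
      constructor
      · have h0 : K / Real.sqrt 2 * sL⁻¹ = K / (Real.sqrt 2 * sL) := by
          field_simp
        rw [h0, div_le_div_iff₀ (by positivity) hr0]
        exact mul_le_mul_of_nonneg_left hle_sL hK.le
      · have h0 : K * sL⁻¹ = K / sL := by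
          field_simp
        rw [h0, div_le_div_iff₀ hr0 hsL0]
        exact mul_le_mul_of_nonneg_left hsL_le hK.le
    · have hcompact : IsCompact (simplexΔ r y yv) :=
        ((Set.finite_range yv).insert (apexPt r y)).isCompact_convexHull (𝕜 := ℝ)
      have hmeas : MeasurableSet (simplexΔ r y yv) := hcompact.isClosed.measurableSet
      have hfin : volume (simplexΔ r y yv) ≠ ⊤ := hcompact.measure_lt_top.ne
      obtain ⟨hglo, hgup⟩ := gauss_sandwich d (simplexΔ r y yv) hmeas r hr0
        (hcfg.norm_bounds hr1) hfin
      rw [hvol] at hglo hgup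
      rw [show -(r ^ 2 + 3) / 2 = -r ^ 2 / 2 + -(3:ℝ)/2 by ring, Real.exp_add, hexp] at hglo
      rw [hexp] at hgup
      constructor
      · refine le_trans ?_ hglo
        have key2 : 1 / (Real.sqrt 2 * (n:ℝ)) ≤ sL / ((n:ℝ) * r) := by
          rw [div_le_div_iff₀ (by positivity) (mul_pos hn0 hr0)]
          nlinarith [mul_le_mul_of_nonneg_left hle_sL hn0.le]
        calc C * Real.exp (-(3:ℝ)/2) * K / Real.sqrt 2 / (n:ℝ)
            = (C * Real.exp (-(3:ℝ)/2) * K) * (1 / (Real.sqrt 2 * (n:ℝ))) := by ring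
          _ ≤ (C * Real.exp (-(3:ℝ)/2) * K) * (sL / ((n:ℝ) * r)) :=
              mul_le_mul_of_nonneg_left key2 (by positivity)
          _ = C * (sL / (n:ℝ) * Real.exp (-(3:ℝ)/2)) * (K / r) := by ring
      · refine le_trans hgup ?_
        have key3 : sL / ((n:ℝ) * r) ≤ 1 / (n:ℝ) := by
          rw [div_le_div_iff₀ (mul_pos hn0 hr0) hn0]
          nlinarith [mul_le_mul_of_nonneg_left hsL_le hn0.le]
        calc C * (sL / (n:ℝ)) * (K / r) = (C * K) * (sL / ((n:ℝ) * r)) := by ring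
          _ ≤ (C * K) * (1 / (n:ℝ)) := mul_le_mul_of_nonneg_left key3 (by positivity)
          _ = C * K / (n:ℝ) := by ring

end
end

section
/- In the setting of the construction, let D_i := pos{y_i^j − y_i⁰ : j = 1,…,d} be the internal cone of the simplex Δ_i at its apex y_i⁰. Then C(y_i − y_i⁰, arctan(√2·r/(d−1))) ⊆ D_i ⊆ C(y_i − y_i⁰, arctan(√2·r)), where for z ≠ 0 and α ∈ [0, π/2], C(z, α) := {x ∈ R^d : ∠(x, z) ≤ α} is the closed circular cone with axis {tz : t ≥ 0} and angle α. -/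
open MeasureTheory ProbabilityTheory Real Set Filter
open scoped ENNReal NNReal RealInnerProductSpace MeasureTheory

noncomputable section

/-!
Write `u j = y^j - y` and `z = y - y⁰ = -r⁻² y`. The `u j` are `d` vectors of length `√2` with
equal pairwise inner products lying in the `(d-1)`-dimensional hyperplane `y^⊥`. Being linearly
dependent, they sum to `0`; any `d - 1` of them are independent, so they span `y^⊥`, and there
they form a tight frame: `∑ ⟪w, u j⟫ u j = (2d/(d-1)) w`.

A vector `w + t z` with `w ⊥ z` lies in `C(z, arctan T)` iff `t ≥ 0` and `‖w‖ ≤ T t ‖z‖`. Each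
generator `u j + z` satisfies this with `T = √2 r`, and the circular cone is convex, which gives
the outer inclusion. For the inner one, the tight frame gives the explicit coefficients
`c j = t/d + ((d-1)/(2d)) ⟪w, u j⟫`, which are nonnegative by Cauchy–Schwarz exactly when
`‖w‖ ≤ (√2 r/(d-1)) t ‖z‖`.
-/

section ConstantGram

variable {E : Type*} [NormedAddCommGroup E] [InnerProductSpace ℝ E]
  {ι : Type*} [Fintype ι] [DecidableEq ι] {u : ι → E} {a b : ℝ}

theorem inner_sum_smul_of_inner_eq_ite (hu : ∀ i j, ⟪u i, u j⟫ = if i = j then a else b)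
    (l : ι → ℝ) (m : ι) : ⟪∑ i, l i • u i, u m⟫ = b * ∑ i, l i + (a - b) * l m := by
  have hterm : ∀ i, ⟪l i • u i, u m⟫ = b * l i + if i = m then (a - b) * l i else 0 := by
    intro i
    rw [real_inner_smul_left, hu]
    split_ifs <;> ring
  simp only [sum_inner, hterm, Finset.sum_add_distrib, Finset.sum_ite_eq', Finset.mem_univ,
    if_true, Finset.mul_sum]

theorem eq_of_sum_smul_eq_zero_of_inner_eq_ite (hab : b ≠ a)
    (hu : ∀ i j, ⟪u i, u j⟫ = if i = j then a else b) {l : ι → ℝ}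
    (hl : ∑ i, l i • u i = 0) (i j : ι) : l i = l j := by
  have hm : ∀ m, b * ∑ i, l i + (a - b) * l m = 0 := fun m => by
    rw [← inner_sum_smul_of_inner_eq_ite hu, hl, inner_zero_left]
  have : (a - b) * (l i - l j) = 0 := by linear_combination hm i - hm j
  exact sub_eq_zero.mp ((mul_eq_zero.mp this).resolve_left (sub_ne_zero.mpr hab.symm))

theorem sum_eq_zero_of_not_linearIndependent_of_inner_eq_ite (hab : b ≠ a)
    (hu : ∀ i j, ⟪u i, u j⟫ = if i = j then a else b) (h : ¬LinearIndependent ℝ u) :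
    ∑ i, u i = 0 := by
  obtain ⟨l, hl, i, hi⟩ := Fintype.not_linearIndependent_iff.mp h
  have hconst : ∑ j, l j • u j = l i • ∑ j, u j := by
    rw [Finset.smul_sum]
    exact Finset.sum_congr rfl fun j _ => by
      rw [eq_of_sum_smul_eq_zero_of_inner_eq_ite hab hu hl j i]
  exact (smul_eq_zero.mp (hconst ▸ hl)).resolve_left hi

theorem mul_card_add_sub_eq_zero_of_inner_eq_ite
    (hu : ∀ i j, ⟪u i, u j⟫ = if i = j then a else b) (hsum : ∑ i, u i = 0) (m : ι) :
    b * Fintype.card ι + (a - b) = 0 := by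
  simpa [hsum] using (inner_sum_smul_of_inner_eq_ite hu (fun _ => 1) m).symm

theorem sum_inner_smul_eq_of_inner_eq_ite (hu : ∀ i j, ⟪u i, u j⟫ = if i = j then a else b)
    (hsum : ∑ i, u i = 0) {w : E} (hw : w ∈ Submodule.span ℝ (range u)) :
    ∑ j, ⟪w, u j⟫ • u j = (a - b) • w := by
  obtain ⟨l, rfl⟩ := (Submodule.mem_span_range_iff_exists_fun ℝ).mp hw
  simp only [inner_sum_smul_of_inner_eq_ite hu, add_smul, Finset.sum_add_distrib,
    ← Finset.smul_sum, hsum, smul_zero, zero_add, mul_smul]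

theorem linearIndependent_succ_of_inner_eq_ite {n : ℕ} {u : Fin (n + 1) → E} (hab : b ≠ a)
    (hu : ∀ i j, ⟪u i, u j⟫ = if i = j then a else b) :
    LinearIndependent ℝ (fun i : Fin n => u i.succ) := by
  rw [Fintype.linearIndependent_iff]
  intro g hg i
  have hl : ∑ j, (Fin.cons 0 g : Fin (n + 1) → ℝ) j • u j = 0 := by
    simpa [Fin.sum_univ_succ] using hg
  simpa using eq_of_sum_smul_eq_zero_of_inner_eq_ite hab hu hl i.succ 0

end ConstantGram

section Hyperplane

variable {E : Type*} [NormedAddCommGroup E] [InnerProductSpace ℝ E] [FiniteDimensional ℝ E]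
  {n : ℕ} {u : Fin (n + 1) → E} {a b : ℝ} {K : Submodule ℝ E}

theorem sum_eq_zero_of_inner_eq_ite_of_mem (hab : b ≠ a)
    (hu : ∀ i j, ⟪u i, u j⟫ = if i = j then a else b) (hK : Module.finrank ℝ K = n)
    (huK : ∀ i, u i ∈ K) : ∑ i, u i = 0 := by
  refine sum_eq_zero_of_not_linearIndependent_of_inner_eq_ite hab hu fun hli => ?_
  have := Submodule.finrank_mono (Submodule.span_le.mpr (range_subset_iff.mpr huK))
  rw [finrank_span_eq_card hli, Fintype.card_fin, hK] at this
  omega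

theorem span_range_eq_of_inner_eq_ite_of_mem (hab : b ≠ a)
    (hu : ∀ i j, ⟪u i, u j⟫ = if i = j then a else b) (hK : Module.finrank ℝ K = n)
    (huK : ∀ i, u i ∈ K) : Submodule.span ℝ (range u) = K := by
  refine Submodule.eq_of_le_of_finrank_le (Submodule.span_le.mpr (range_subset_iff.mpr huK)) ?_
  calc Module.finrank ℝ K
      = Module.finrank ℝ (Submodule.span ℝ (range fun i : Fin n => u i.succ)) := by
        rw [finrank_span_eq_card (linearIndependent_succ_of_inner_eq_ite hab hu),
          Fintype.card_fin, hK]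
    _ ≤ Module.finrank ℝ (Submodule.span ℝ (range u)) :=
        Submodule.finrank_mono (Submodule.span_mono (range_comp_subset_range _ u))

end Hyperplane

section Cone

variable {d : ℕ}

theorem add_smul_mem_circCone_arctan_iff {z w : Euc d} {T : ℝ} (hz : z ≠ 0) (hT : 0 ≤ T)
    (hwz : ⟪w, z⟫ = 0) (t : ℝ) :
    w + t • z ∈ circCone z (arctan T) ↔ 0 ≤ t ∧ ‖w‖ ≤ T * t * ‖z‖ := by
  set s := √(1 + T ^ 2) with hs_def
  have hs : 0 < s := Real.sqrt_pos.mpr (by positivity)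
  have hs2 : s ^ 2 = 1 + T ^ 2 := Real.sq_sqrt (by positivity)
  have hN : 0 < ‖z‖ := norm_pos_iff.mpr hz
  have hinner : ⟪w + t • z, z⟫ = t * ‖z‖ ^ 2 := by
    rw [inner_add_left, hwz, real_inner_smul_left, real_inner_self_eq_norm_sq, zero_add]
  have hnorm : ‖w + t • z‖ ^ 2 = ‖w‖ ^ 2 + t ^ 2 * ‖z‖ ^ 2 := by
    rw [norm_add_sq_real, real_inner_smul_right, hwz, norm_smul, Real.norm_eq_abs, mul_pow,
      sq_abs]
    ring
  have hcone : w + t • z ∈ circCone z (arctan T) ↔ ‖w + t • z‖ ≤ s * t * ‖z‖ := by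
    rw [circCone, mem_ofPred_eq, cos_arctan, hinner, ← hs_def, one_div, inv_mul_le_iff₀ hs]
    constructor <;> intro h <;> nlinarith
  rw [hcone]
  constructor
  · intro h
    have ht : 0 ≤ t := by
      have := (norm_nonneg _).trans h
      exact nonneg_of_mul_nonneg_right (by nlinarith) hN
    refine ⟨ht, (pow_le_pow_iff_left₀ (norm_nonneg _) (by positivity) two_ne_zero).mp ?_⟩
    have := pow_le_pow_left₀ (norm_nonneg _) h 2
    nlinarith
  · rintro ⟨ht, h⟩
    refine (pow_le_pow_iff_left₀ (norm_nonneg _) (by positivity) two_ne_zero).mp ?_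
    have := pow_le_pow_left₀ (norm_nonneg _) h 2
    nlinarith

theorem posHull_subset_circCone {ι : Type} [Fintype ι] {v : ι → Euc d} {z : Euc d} {α : ℝ}
    (hα : 0 ≤ cos α) (hv : ∀ i, v i ∈ circCone z α) : posHull v ⊆ circCone z α := by
  rintro _ ⟨c, hc, rfl⟩
  calc cos α * (‖∑ i, c i • v i‖ * ‖z‖)
      ≤ cos α * ((∑ i, c i * ‖v i‖) * ‖z‖) := by
        gcongr
        refine (norm_sum_le _ _).trans_eq (Finset.sum_congr rfl fun i _ => ?_)
        rw [norm_smul, Real.norm_of_nonneg (hc i)]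
    _ = ∑ i, c i * (cos α * (‖v i‖ * ‖z‖)) := by
        rw [Finset.sum_mul, Finset.mul_sum]
        exact Finset.sum_congr rfl fun i _ => by ring
    _ ≤ ∑ i, c i * ⟪v i, z⟫ := by
        gcongr with i
        · exact hc i
        · exact hv i
    _ = ⟪∑ i, c i • v i, z⟫ := by simp only [sum_inner, real_inner_smul_left]

theorem circCone_arctan_subset_posHull_add {ι : Type} [Fintype ι] [Nonempty ι]
    {z : Euc d} {u : ι → Euc d} {ρ μ T : ℝ} (hz : z ≠ 0) (hT : 0 ≤ T) (hμ : 0 < μ)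
    (hsum : ∑ i, u i = 0)
    (hframe : ∀ w, ⟪w, z⟫ = 0 → ∑ i, ⟪w, u i⟫ • u i = μ • w) (hρ : ∀ i, ‖u i‖ ≤ ρ)
    (hTμ : T * ρ * ‖z‖ * Fintype.card ι ≤ μ) :
    circCone z (arctan T) ⊆ posHull (fun i => u i + z) := by
  intro x hx
  set t := ⟪x, z⟫ / ‖z‖ ^ 2
  set w := x - t • z
  have hwz : ⟪w, z⟫ = 0 := by
    have : ‖z‖ ^ 2 ≠ 0 := by positivity
    rw [inner_sub_left, real_inner_smul_left, real_inner_self_eq_norm_sq,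
      div_mul_cancel₀ _ this, sub_self]
  rw [← sub_add_cancel x (t • z)] at hx
  obtain ⟨ht, hwT⟩ := (add_smul_mem_circCone_arctan_iff hz hT hwz t).mp hx
  have hcard : (0 : ℝ) < Fintype.card ι := by exact_mod_cast Fintype.card_pos
  set c : ι → ℝ := fun i => t / Fintype.card ι + μ⁻¹ * ⟪w, u i⟫
  have hc : ∀ i, 0 ≤ c i := fun i => by
    have hcauchy : -(‖w‖ * ‖u i‖) ≤ ⟪w, u i⟫ :=
      neg_le_of_abs_le (abs_real_inner_le_norm w (u i))
    have h1 : ‖w‖ * ‖u i‖ ≤ T * t * ‖z‖ * ρ :=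
      mul_le_mul hwT (hρ i) (norm_nonneg _) (by positivity)
    have h2 : T * t * ‖z‖ * ρ * Fintype.card ι ≤ μ * t := by nlinarith
    have hci : c i = (μ * t + Fintype.card ι * ⟪w, u i⟫) / (Fintype.card ι * μ) := by
      simp only [c]
      field_simp
    rw [hci]
    exact div_nonneg (by nlinarith) (by positivity)
  have hcu : ∑ i, c i • u i = w := by
    simp only [c, add_smul, Finset.sum_add_distrib, ← Finset.smul_sum, hsum, smul_zero, zero_add,
      mul_smul, hframe w hwz, inv_smul_smul₀ hμ.ne']
  have hcs : ∑ i, c i = t := by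
    simp only [c, Finset.sum_add_distrib, Finset.sum_const, Finset.card_univ, nsmul_eq_mul,
      ← Finset.mul_sum, ← inner_sum, hsum, inner_zero_right, mul_zero, add_zero]
    field_simp
  refine ⟨c, hc, ?_⟩
  simp only [smul_add, Finset.sum_add_distrib, ← Finset.sum_smul, hcu, hcs, w, sub_add_cancel]

end Cone

theorem sub_apexPt {d : ℕ} (r : ℝ) (y : Euc d) : y - apexPt r y = -(r ^ 2)⁻¹ • y := by
  rw [apexPt]
  module

namespace SimplexConfig

variable {d : ℕ} {r : ℝ} {y : Euc d} {yv : Fin d → Euc d}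

theorem inner_sub_self (h : SimplexConfig d r y yv) (j : Fin d) : ⟪yv j - y, y⟫ = 0 := by
  rw [inner_sub_left, h.mem_tangent, real_inner_self_eq_norm_sq, h.norm_y, sub_self]

theorem inner_sub_apexPt (h : SimplexConfig d r y yv) (j : Fin d) :
    ⟪yv j - y, y - apexPt r y⟫ = 0 := by
  rw [sub_apexPt, real_inner_smul_right, h.inner_sub_self, mul_zero]

theorem norm_sub_apexPt (h : SimplexConfig d r y yv) (hr : 0 < r) : ‖y - apexPt r y‖ = r⁻¹ := by
  rw [sub_apexPt, norm_smul, norm_neg, norm_inv, norm_pow, Real.norm_of_nonneg hr.le, h.norm_y]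
  field_simp

theorem exists_inner_sub_eq_ite (h : SimplexConfig d r y yv) :
    ∃ b < 2, ∀ i j, ⟪yv i - y, yv j - y⟫ = if i = j then 2 else b := by
  obtain ⟨s, hs, hreg⟩ := h.regular
  have hsq : ∀ j, ‖yv j - y‖ ^ 2 = 2 := fun j => by
    rw [h.circumradius, Real.sq_sqrt zero_le_two]
  refine ⟨2 - s ^ 2 / 2, by nlinarith, fun i j => ?_⟩
  split_ifs with hij
  · rw [hij, real_inner_self_eq_norm_sq, hsq]
  · have := norm_sub_sq_real (yv i - y) (yv j - y)
    rw [sub_sub_sub_cancel_right, hreg i j hij, hsq, hsq] at this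
    linarith

theorem posHull_subset_circCone (h : SimplexConfig d r y yv) (hr : 0 < r) :
    posHull (fun j => yv j - apexPt r y) ⊆ circCone (y - apexPt r y) (arctan (√2 * r)) := by
  have hz : y - apexPt r y ≠ 0 := norm_ne_zero_iff.mp (by simp [h.norm_sub_apexPt hr, hr.ne'])
  refine _root_.posHull_subset_circCone (cos_arctan_pos _).le fun j => ?_
  have hmem := (add_smul_mem_circCone_arctan_iff (T := √2 * r) hz (by positivity)
    (h.inner_sub_apexPt j) 1).mpr ⟨zero_le_one, by
      rw [h.circumradius, h.norm_sub_apexPt hr, mul_one, mul_inv_cancel_right₀ hr.ne']⟩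
  simpa using hmem

theorem tight_frame (h : SimplexConfig d r y yv) (hr : 0 < r) :
    1 < d ∧ ∑ j, (yv j - y) = 0 ∧
      ∀ w, ⟪w, y⟫ = 0 → ∑ j, ⟪w, yv j - y⟫ • (yv j - y) = (2 * d / (d - 1) : ℝ) • w := by
  have hy : y ≠ 0 := norm_ne_zero_iff.mp (h.norm_y ▸ hr.ne')
  obtain ⟨n, rfl⟩ : ∃ n, d = n + 1 :=
    Nat.exists_eq_add_one.mpr <| Nat.pos_of_ne_zero fun hd => hy <| by
      subst hd
      exact Subsingleton.elim _ _
  obtain ⟨b, hb, hu⟩ := h.exists_inner_sub_eq_ite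
  have : Fact (Module.finrank ℝ (Euc (n + 1)) = n + 1) := ⟨finrank_euclideanSpace_fin⟩
  have hK : Module.finrank ℝ (ℝ ∙ y)ᗮ = n := Submodule.finrank_orthogonal_span_singleton hy
  have huK : ∀ j, yv j - y ∈ (ℝ ∙ y)ᗮ := fun j =>
    Submodule.mem_orthogonal_singleton_iff_inner_left.mpr (h.inner_sub_self j)
  have hsum := sum_eq_zero_of_inner_eq_ite_of_mem hb.ne hu hK huK
  have hbn := mul_card_add_sub_eq_zero_of_inner_eq_ite hu hsum 0
  rw [Fintype.card_fin, Nat.cast_add_one] at hbn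
  have hn : n ≠ 0 := by
    rintro rfl
    norm_num at hbn
  refine ⟨by omega, hsum, fun w hw => ?_⟩
  have hμ : (2 * ((n + 1 : ℕ) : ℝ) / ((n + 1 : ℕ) - 1)) = 2 - b := by
    push_cast
    rw [add_sub_cancel_right]
    field_simp [hn]
    linarith
  rw [hμ]
  exact sum_inner_smul_eq_of_inner_eq_ite hu hsum
    (span_range_eq_of_inner_eq_ite_of_mem hb.ne hu hK huK ▸
      Submodule.mem_orthogonal_singleton_iff_inner_left.mpr hw)

theorem circCone_subset_posHull (h : SimplexConfig d r y yv) (hr : 0 < r) :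
    circCone (y - apexPt r y) (arctan (√2 * r / ((d : ℝ) - 1))) ⊆
      posHull (fun j => yv j - apexPt r y) := by
  obtain ⟨hd, hsum, hframe⟩ := h.tight_frame hr
  have hd' : (0 : ℝ) < d - 1 := sub_pos.mpr (by exact_mod_cast hd)
  have : Nonempty (Fin d) := ⟨⟨0, by omega⟩⟩
  have hz : y - apexPt r y ≠ 0 := norm_ne_zero_iff.mp (by simp [h.norm_sub_apexPt hr, hr.ne'])
  have hframe' : ∀ w, ⟪w, y - apexPt r y⟫ = 0 →
      ∑ j, ⟪w, yv j - y⟫ • (yv j - y) = (2 * d / (d - 1) : ℝ) • w := fun w hw => by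
    rw [sub_apexPt, real_inner_smul_right, mul_eq_zero] at hw
    exact hframe w (hw.resolve_left (by simp [hr.ne']))
  have hTμ : √2 * r / (d - 1) * √2 * ‖y - apexPt r y‖ * Fintype.card (Fin d) ≤
      2 * d / (d - 1) := by
    rw [h.norm_sub_apexPt hr, Fintype.card_fin]
    field_simp
    rw [Real.sq_sqrt zero_le_two]
  simpa only [sub_add_sub_cancel] using circCone_arctan_subset_posHull_add hz (by positivity)
    (by positivity) hsum hframe' (fun j => (h.circumradius j).le) hTμ

end SimplexConfig

theorem rr_pos {n : ℕ} (hn : 2 ≤ n) : 0 < rr n := by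
  have hlog : 0 < Real.log n := Real.log_pos (by exact_mod_cast hn)
  exact Real.sqrt_pos.mpr (by linarith [Real.log_le_sub_one_of_pos hlog])

theorem internal_cone_of_simplex_bounds_general (d : ℕ) :
    ∃ N : ℕ, ∀ n : ℕ, N ≤ n →
      ∀ (y : Euc d) (yv : Fin d → Euc d), SimplexConfig d (rr n) y yv →
        circCone (y - apexPt (rr n) y)
            (Real.arctan (Real.sqrt 2 * rr n / ((d : ℝ) - 1))) ⊆
          posHull (fun j : Fin d => yv j - apexPt (rr n) y) ∧
        posHull (fun j : Fin d => yv j - apexPt (rr n) y) ⊆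
          circCone (y - apexPt (rr n) y) (Real.arctan (Real.sqrt 2 * rr n)) :=
  ⟨2, fun _ hn _ _ h =>
    ⟨h.circCone_subset_posHull (rr_pos hn), h.posHull_subset_circCone (rr_pos hn)⟩⟩

/-- The internal cone `D = pos{y^j − y⁰ : j = 1,…,d}` of `Δ` at its apex `y⁰` satisfies
`C(y − y⁰, arctan(√2 r/(d−1))) ⊆ D ⊆ C(y − y⁰, arctan(√2 r))`. -/
theorem internal_cone_of_simplex_bounds (d : ℕ) (hd : 1 ≤ d) :
    ∃ N : ℕ, ∀ n : ℕ, N ≤ n →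
      ∀ (y : Euc d) (yv : Fin d → Euc d), SimplexConfig d (rr n) y yv →
        circCone (y - apexPt (rr n) y)
            (Real.arctan (Real.sqrt 2 * rr n / ((d : ℝ) - 1))) ⊆
          posHull (fun j : Fin d => yv j - apexPt (rr n) y) ∧
        posHull (fun j : Fin d => yv j - apexPt (rr n) y) ⊆
          circCone (y - apexPt (rr n) y) (Real.arctan (Real.sqrt 2 * rr n)) :=
  internal_cone_of_simplex_bounds_general d

end
end

section
/- Let d ≥ 1, z ∈ S^{d−1}, and ℓ ∈ {1,…,d}. There exist constants c₄ ∈ (0,∞) and c > 0, depending only on d and ℓ, such that for all 0 < a < c₄, ν_ℓ({L ∈ G(d,ℓ) : ∠(z, L) ≤ a}) ≥ c·a^{d−ℓ}. -/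
open MeasureTheory ProbabilityTheory Real Set Filter
open scoped ENNReal NNReal RealInnerProductSpace MeasureTheory

noncomputable section

/-- Measurable structure on the space of linear subspaces of `ℝ^d`, via the embedding sending a
subspace to the orthogonal projection onto it. -/
noncomputable instance grassMS (d : ℕ) : MeasurableSpace (Submodule ℝ (Euc d)) :=
  MeasurableSpace.comap
    (fun L => (L.subtypeL.comp (L.orthogonalProjection) : Euc d →L[ℝ] Euc d))
    (borel _)

/-- `ν` is the Haar probability measure on the Grassmannian `G(d,ℓ)`: a probability measure
concentrated on the `ℓ`-dimensional subspaces, invariant under the orthogonal group. -/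
structure IsHaarGrassmannian (d ℓ : ℕ) (ν : Measure (Submodule ℝ (Euc d))) : Prop where
  prob : IsProbabilityMeasure ν
  dim : ν {L | Module.finrank ℝ L ≠ ℓ} = 0
  inv : ∀ g : Euc d ≃ₗᵢ[ℝ] Euc d,
    Measure.map (fun L => L.map (g.toLinearEquiv : Euc d →ₗ[ℝ] Euc d)) ν = ν

/-- `κ_j`, the volume of the `j`-dimensional unit ball. -/
noncomputable def ballVol (j : ℕ) : ℝ := π ^ ((j : ℝ) / 2) / Real.Gamma (1 + (j : ℝ) / 2)

/-- `vol_ℓ(K|L)`: the `ℓ`-dimensional (Hausdorff = Lebesgue) measure of the orthogonal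
projection of `K` onto the subspace `L`. -/
noncomputable def projVol (d ℓ : ℕ) (L : Submodule ℝ (Euc d)) (K : Set (Euc d)) : ℝ :=
  (μH[(ℓ : ℝ)] ((fun x => (L.orthogonalProjection x : Euc d)) '' K)).toReal

/-- The `ℓ`-th intrinsic volume `V_ℓ(K)`, defined via Kubota's formula with respect to a
(Haar) measure `ν` on the Grassmannian. -/
noncomputable def intrinsicVol (d ℓ : ℕ) (ν : Measure (Submodule ℝ (Euc d)))
    (K : Set (Euc d)) : ℝ :=
  (d.choose ℓ) * (ballVol d / (ballVol ℓ * ballVol (d - ℓ))) * ∫ L, projVol d ℓ L K ∂ν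


/-!
Integrate the indicator of `C = {(x, L) | cos a * ‖x‖ ≤ ‖P_L x‖}` against
`volume|B(0, 2) ⊗ ν` in both orders. A reflection exchanging `x / ‖x‖` and `z` shows, by
invariance of `ν`, that every slice at `x ≠ 0` has the `ν`-measure of the set of subspaces within
angle `a` of `z`; so the integral is that measure times `vol B(0, 2)`. Conversely, for `L` of
dimension `ℓ` the slice contains all `p + q` with `p ∈ L` at distance `≤ 1/2` from a unit vector
of `L` and `q ∈ Lᗮ` of norm `≤ sin a / 2`. Since `ℝ^d ≃ L × Lᗮ` preserves volume, this slice has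
volume `≥ c · (sin a)^(d - ℓ) ≥ c · (2a / π)^(d - ℓ)`.
-/

open Module Metric

section Volume

variable {E : Type*} [NormedAddCommGroup E] [InnerProductSpace ℝ E]

theorem setOf_exists_mem_mul_norm_le_inner [FiniteDimensional ℝ E] {c : ℝ} (hc : 0 < c)
    (z : E) :
    {L : Submodule ℝ E | ∃ x : E, x ∈ L ∧ x ≠ 0 ∧ c * ‖x‖ ≤ ⟪z, x⟫} =
      {L | c ≤ ‖L.starProjection z‖} := by
  ext L
  simp only [mem_ofPred_eq]
  constructor
  · rintro ⟨x, hxL, hx0, hx⟩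
    have hzx : ⟪z, x⟫ = ⟪L.starProjection z, x⟫ := by
      rw [L.inner_starProjection_left_eq_right, L.starProjection_eq_self_iff.mpr hxL]
    rw [hzx] at hx
    exact le_of_mul_le_mul_right (hx.trans (real_inner_le_norm _ _)) (norm_pos_iff.mpr hx0)
  · intro h
    have hP : ⟪z, L.starProjection z⟫ = ‖L.starProjection z‖ ^ 2 := by
      rw [← L.inner_starProjection_left_eq_right]
      exact L.re_inner_starProjection_eq_normSq z
    refine ⟨L.starProjection z, L.starProjection_apply_mem z, fun h0 => ?_, ?_⟩
    · rw [h0, norm_zero] at h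
      linarith
    · rw [hP, sq]
      exact mul_le_mul_of_nonneg_right h (norm_nonneg _)

theorem cos_mul_norm_le_norm_orthogonalProjectionOnto (K : Submodule ℝ E)
    [K.HasOrthogonalProjection] (x : E) {a : ℝ}
    (hx : ‖Kᗮ.orthogonalProjectionOnto x‖ ≤ sin a * ‖K.orthogonalProjectionOnto x‖) :
    cos a * ‖x‖ ≤ ‖K.orthogonalProjectionOnto x‖ := by
  have hsq : (cos a * ‖x‖) ^ 2 ≤ ‖K.orthogonalProjectionOnto x‖ ^ 2 := by
    have hx2 := pow_le_pow_left₀ (norm_nonneg _) hx 2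
    rw [mul_pow, K.norm_sq_eq_add_norm_sq_projection x]
    nlinarith [sin_sq_add_cos_sq a, cos_sq_le_one a,
      sq_nonneg (cos a * ‖Kᗮ.orthogonalProjectionOnto x‖)]
  exact (abs_le_of_sq_le_sq' hsq (norm_nonneg _)).2

variable [FiniteDimensional ℝ E] [MeasurableSpace E] [BorelSpace E]

theorem volume_closedBall_eq_euclideanSpace (x : E) (r : ℝ) :
    volume (closedBall x r) =
      volume (closedBall (0 : EuclideanSpace ℝ (Fin (finrank ℝ E))) r) := by
  set e := (stdOrthonormalBasis ℝ E).repr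
  rw [Measure.addHaar_closedBall_center,
    ← e.measurePreserving.measure_preimage measurableSet_closedBall.nullMeasurableSet,
    LinearIsometryEquiv.preimage_closedBall, map_zero]

theorem volume_closedBall_mul_volume_closedBall_le_volume_cone (K : Submodule ℝ E)
    (hK : 0 < finrank ℝ K) (a : ℝ) :
    volume (closedBall (0 : EuclideanSpace ℝ (Fin (finrank ℝ K))) (1 / 2)) *
        volume (closedBall (0 : EuclideanSpace ℝ (Fin (finrank ℝ Kᗮ))) (sin a / 2)) ≤
      volume ({x | cos a * ‖x‖ ≤ ‖K.starProjection x‖} ∩ closedBall (0 : E) 2) := by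
  have : Nontrivial K := finrank_pos_iff.mp hK
  obtain ⟨p₀, hp₀⟩ := exists_norm_eq K zero_le_one
  set φ : E → K × Kᗮ := fun x => WithLp.ofLp (K.orthogonalDecomposition x)
  have hφ : MeasurePreserving φ :=
    (WithLp.volume_preserving_ofLp K Kᗮ).comp (LinearIsometryEquiv.measurePreserving _)
  set S := closedBall p₀ (1 / 2) ×ˢ closedBall (0 : Kᗮ) (sin a / 2)
  have hS : MeasurableSet S := measurableSet_closedBall.prod measurableSet_closedBall
  calc _ = volume S := by
          rw [Measure.volume_eq_prod, Measure.prod_prod, volume_closedBall_eq_euclideanSpace p₀,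
            volume_closedBall_eq_euclideanSpace (0 : Kᗮ)]
    _ = volume (φ ⁻¹' S) := (hφ.measure_preimage hS.nullMeasurableSet).symm
    _ ≤ _ := by
      refine measure_mono fun x ⟨hP, hQ⟩ => ?_
      simp only [φ, Submodule.orthogonalDecomposition_apply, mem_closedBall,
        dist_zero_right] at hP hQ
      have hP' := abs_le.mp ((abs_norm_sub_norm_le (K.orthogonalProjectionOnto x) p₀).trans
        (dist_eq_norm _ p₀ ▸ hP))
      have hQ₀ := norm_nonneg (Kᗮ.orthogonalProjectionOnto x)
      refine ⟨cos_mul_norm_le_norm_orthogonalProjectionOnto K x (by nlinarith), ?_⟩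
      rw [mem_closedBall, dist_zero_right]
      refine (abs_le_of_sq_le_sq' ?_ zero_le_two).2
      rw [K.norm_sq_eq_add_norm_sq_projection x]
      nlinarith [sin_le_one a]

end Volume

section Grassmannian

variable {d : ℕ}

theorem measurable_starProjection :
    Measurable fun L : Submodule ℝ (Euc d) => L.starProjection :=
  comap_measurable _

theorem measurable_starProjection_apply :
    Measurable fun p : Euc d × Submodule ℝ (Euc d) => p.2.starProjection p.1 :=
  isBoundedBilinearMap_apply.continuous.measurable.comp
    ((measurable_starProjection.comp measurable_snd).prodMk measurable_fst)

theorem measurable_map_linearIsometryEquiv (g : Euc d ≃ₗᵢ[ℝ] Euc d) :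
    Measurable fun L : Submodule ℝ (Euc d) => L.map (g.toLinearEquiv : Euc d →ₗ[ℝ] Euc d) := by
  set Φ : (Euc d →L[ℝ] Euc d) → (Euc d →L[ℝ] Euc d) := fun P =>
    (g.toContinuousLinearEquiv : Euc d →L[ℝ] Euc d) ∘L P ∘L
      (g.symm.toContinuousLinearEquiv : Euc d →L[ℝ] Euc d)
  have hΦ : Continuous Φ := by fun_prop
  have hmap : (fun L : Submodule ℝ (Euc d) =>
      (L.map (g.toLinearEquiv : Euc d →ₗ[ℝ] Euc d)).starProjection) =
      Φ ∘ fun L => L.starProjection := by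
    ext L x : 2
    exact Submodule.starProjection_map_apply g L x
  rintro _ ⟨t, ht, rfl⟩
  change MeasurableSet ((fun L : Submodule ℝ (Euc d) =>
      (L.map (g.toLinearEquiv : Euc d →ₗ[ℝ] Euc d)).starProjection) ⁻¹' t)
  rw [hmap]
  exact (hΦ.measurable.comp measurable_starProjection) ht

theorem measure_setOf_le_norm_starProjection_eq {ν : Measure (Submodule ℝ (Euc d))}
    (hν : ∀ g : Euc d ≃ₗᵢ[ℝ] Euc d,
      Measure.map (fun L => L.map (g.toLinearEquiv : Euc d →ₗ[ℝ] Euc d)) ν = ν)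
    (r : ℝ) {u z : Euc d} (huz : ‖u‖ = ‖z‖) :
    ν {L | r ≤ ‖L.starProjection u‖} = ν {L | r ≤ ‖L.starProjection z‖} := by
  set g : Euc d ≃ₗᵢ[ℝ] Euc d := Submodule.reflection (ℝ ∙ (u - z))ᗮ
  have hgu : g.symm z = u := by
    rw [LinearIsometryEquiv.symm_apply_eq]; exact (Submodule.reflection_sub huz).symm
  have hmeas : MeasurableSet {L : Submodule ℝ (Euc d) | r ≤ ‖L.starProjection z‖} :=
    measurableSet_le measurable_const
      (measurable_starProjection_apply.comp (measurable_const.prodMk measurable_id)).norm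
  conv_rhs => rw [← hν g, Measure.map_apply (measurable_map_linearIsometryEquiv g) hmeas]
  congr 1
  ext L
  simp only [mem_ofPred_eq, mem_preimage, Submodule.starProjection_map_apply, hgu,
    LinearIsometryEquiv.norm_map]

theorem measure_setOf_mul_norm_le_norm_starProjection_eq {ν : Measure (Submodule ℝ (Euc d))}
    (hν : ∀ g : Euc d ≃ₗᵢ[ℝ] Euc d,
      Measure.map (fun L => L.map (g.toLinearEquiv : Euc d →ₗ[ℝ] Euc d)) ν = ν)
    (c : ℝ) {x z : Euc d} (hx : x ≠ 0) (hz : ‖z‖ = 1) :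
    ν {L | c * ‖x‖ ≤ ‖L.starProjection x‖} = ν {L | c ≤ ‖L.starProjection z‖} := by
  rw [measure_setOf_le_norm_starProjection_eq hν _ (by rw [norm_smul, hz, norm_norm, mul_one] :
    ‖x‖ = ‖‖x‖ • z‖)]
  congr 1
  ext L
  simp only [mem_ofPred_eq, map_smul, norm_smul, norm_norm, mul_comm c]
  exact mul_le_mul_iff_right₀ (norm_pos_iff.mpr hx)

theorem volume_mul_volume_le_measure_mul_volume_closedBall {ℓ : ℕ} (hd : 1 ≤ d) (hℓ : 1 ≤ ℓ)
    {ν : Measure (Submodule ℝ (Euc d))} [IsProbabilityMeasure ν]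
    (hν : ∀ g : Euc d ≃ₗᵢ[ℝ] Euc d,
      Measure.map (fun L => L.map (g.toLinearEquiv : Euc d →ₗ[ℝ] Euc d)) ν = ν)
    (hνℓ : ν {L | finrank ℝ L ≠ ℓ} = 0) {z : Euc d} (hz : ‖z‖ = 1) (a : ℝ) :
    volume (closedBall (0 : Euc ℓ) (1 / 2)) * volume (closedBall (0 : Euc (d - ℓ)) (sin a / 2)) ≤
      ν {L | cos a ≤ ‖L.starProjection z‖} * volume (closedBall (0 : Euc d) 2) := by
  have : Nontrivial (Euc d) := finrank_pos_iff (R := ℝ) |>.mp (by rwa [finrank_euclideanSpace_fin])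
  set μ := volume.restrict (closedBall (0 : Euc d) 2)
  set C := {p : Euc d × Submodule ℝ (Euc d) | cos a * ‖p.1‖ ≤ ‖p.2.starProjection p.1‖}
  have hC : MeasurableSet C :=
    measurableSet_le (measurable_const.mul measurable_fst.norm) measurable_starProjection_apply.norm
  have hxC : ∀ᵐ x ∂μ, ν (Prod.mk x ⁻¹' C) = ν {L | cos a ≤ ‖L.starProjection z‖} := by
    filter_upwards [ae_restrict_of_ae (measure_eq_zero_iff_ae_notMem.1 (measure_singleton 0))]
      with x hx
    exact measure_setOf_mul_norm_le_norm_starProjection_eq hν _ hx hz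
  have hLC : ∀ᵐ L ∂ν, volume (closedBall (0 : Euc ℓ) (1 / 2)) *
      volume (closedBall (0 : Euc (d - ℓ)) (sin a / 2)) ≤ μ ((fun x => (x, L)) ⁻¹' C) := by
    filter_upwards [ae_iff.2 hνℓ] with L hL
    have hL' : finrank ℝ Lᗮ = d - ℓ := by
      have := L.finrank_add_finrank_orthogonal
      rw [finrank_euclideanSpace_fin] at this
      omega
    have := volume_closedBall_mul_volume_closedBall_le_volume_cone L (by omega) a
    rw [hL, hL'] at this
    rwa [Measure.restrict_apply' measurableSet_closedBall]
  calc _ = ∫⁻ _, volume (closedBall (0 : Euc ℓ) (1 / 2)) *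
        volume (closedBall (0 : Euc (d - ℓ)) (sin a / 2)) ∂ν := by
        rw [lintegral_const, measure_univ, mul_one]
    _ ≤ ∫⁻ L, μ ((fun x => (x, L)) ⁻¹' C) ∂ν := lintegral_mono_ae hLC
    _ = ∫⁻ x, ν (Prod.mk x ⁻¹' C) ∂μ := by
        rw [← Measure.prod_apply_symm hC, Measure.prod_apply hC]
    _ = _ := by rw [lintegral_congr_ae hxC, lintegral_const, Measure.restrict_apply_univ]

end Grassmannian

theorem haar_measure_subspaces_small_angle_general (d ℓ : ℕ) (hd : 1 ≤ d) (hℓ : 1 ≤ ℓ)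
    (z : Euc d) (hz : ‖z‖ = 1)
    (ν : Measure (Submodule ℝ (Euc d))) (hν : IsHaarGrassmannian d ℓ ν) :
    ∃ c₄ c : ℝ, 0 < c₄ ∧ 0 < c ∧ ∀ a : ℝ, 0 < a → a < c₄ →
      ENNReal.ofReal (c * a ^ (d - ℓ)) ≤
        ν {L | ∃ x : Euc d, x ∈ L ∧ x ≠ 0 ∧ Real.cos a * ‖x‖ ≤ (inner ℝ z x : ℝ)} := by
  have := hν.prob
  set V := volume (closedBall (0 : Euc d) 2)
  set C := volume (closedBall (0 : Euc ℓ) (1 / 2)) * volume (closedBall (0 : Euc (d - ℓ)) 1) / V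
  have hC₀ : C ≠ 0 := (ENNReal.div_pos_iff.2 ⟨mul_ne_zero
    (measure_closedBall_pos _ _ one_half_pos).ne' (measure_closedBall_pos _ _ one_pos).ne',
    measure_closedBall_lt_top.ne⟩).ne'
  have hC : C ≠ ⊤ := ENNReal.div_ne_top (ENNReal.mul_ne_top measure_closedBall_lt_top.ne
    measure_closedBall_lt_top.ne) (measure_closedBall_pos _ _ two_pos).ne'
  refine ⟨π / 2, C.toReal / π ^ (d - ℓ), by positivity, by positivity [ENNReal.toReal_pos hC₀ hC],
    fun a ha₀ ha => ?_⟩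
  rw [setOf_exists_mem_mul_norm_le_inner (cos_pos_of_mem_Ioo ⟨by linarith, ha⟩)]
  have hsin : 2 / π * a ≤ sin a := mul_le_sin ha₀.le ha.le
  have hsin₀ : 0 ≤ sin a := (by positivity : 0 ≤ 2 / π * a).trans hsin
  calc ENNReal.ofReal (C.toReal / π ^ (d - ℓ) * a ^ (d - ℓ))
      = C * ENNReal.ofReal ((a / π) ^ (d - ℓ)) := by
        rw [div_pow, ← mul_div_right_comm, mul_div_assoc, ENNReal.ofReal_mul ENNReal.toReal_nonneg,
          ENNReal.ofReal_toReal hC]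
    _ ≤ C * ENNReal.ofReal ((sin a / 2) ^ (d - ℓ)) := by
        gcongr C * ENNReal.ofReal (?_ ^ _)
        linarith [show a / π = 2 / π * a / 2 by ring]
    _ = volume (closedBall (0 : Euc ℓ) (1 / 2)) *
          volume (closedBall (0 : Euc (d - ℓ)) (sin a / 2)) / V := by
        rw [Measure.addHaar_closedBall' volume (0 : Euc (d - ℓ)) (div_nonneg hsin₀ zero_le_two),
          finrank_euclideanSpace_fin]
        simp only [C, div_eq_mul_inv]
        ring
    _ ≤ _ := ENNReal.div_le_of_le_mul (volume_mul_volume_le_measure_mul_volume_closedBall hd hℓ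
          hν.inv hν.dim hz a)

/-- The Haar measure of the set of `ℓ`-dimensional subspaces making angle at most `a`
with a fixed unit vector `z` is at least of order `a^{d−ℓ}`. -/
theorem haar_measure_subspaces_small_angle (d ℓ : ℕ) (hd : 1 ≤ d) (hℓ : 1 ≤ ℓ) (hℓd : ℓ ≤ d)
    (z : Euc d) (hz : ‖z‖ = 1)
    (ν : Measure (Submodule ℝ (Euc d))) (hν : IsHaarGrassmannian d ℓ ν) :
    ∃ c₄ c : ℝ, 0 < c₄ ∧ 0 < c ∧ ∀ a : ℝ, 0 < a → a < c₄ →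
      ENNReal.ofReal (c * a ^ (d - ℓ)) ≤
        ν {L | ∃ x : Euc d, x ∈ L ∧ x ≠ 0 ∧ Real.cos a * ‖x‖ ≤ (inner ℝ z x : ℝ)} :=
  haar_measure_subspaces_small_angle_general d ℓ hd hℓ z hz ν hν
end
end
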